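/- arXiv:1901.01436 — 2 statements merged into one kernel-verified Lean document; each statement's English description precedes it below -/
import Mathlib

section
/- Let j ≥ 3 be odd and s ≥ 2 even. Then for every integer d with 0 ≤ d ≤ (j-1)s - 1 there exists a d-regular spanning subgraph of the complete multipartite graph K_{j×s}. -/
/-- The complete balanced multipartite graph `K_{j×s}` on `Fin j × Fin s`:
vertices are adjacent iff they lie in different parts (different first coordinate). -/
def multiK (j s : ℕ) : SimpleGraph (Fin j × Fin s) where
  Adj u v := u.1 ≠ v.1
  symm := ⟨fun _ _ h => h.symm⟩
  loopless := ⟨fun _ h => h rfl⟩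

/-- Degree of a vertex, via `Set.ncard` of its neighbor set. -/
noncomputable def mdeg {V : Type*} (G : SimpleGraph V) (v : V) : ℕ :=
  (G.neighborSet v).ncard

/-- `K_{j×s} → (S_n, S_m)`: every red/blue edge coloring (red subgraph `R ≤ K_{j×s}`,
blue the rest) contains a red `K_{1,n-1}` or a blue `K_{1,m-1}`. -/
def Arrows (j s n m : ℕ) : Prop :=
  ∀ R : SimpleGraph (Fin j × Fin s), R ≤ multiK j s →
    (∃ v, n - 1 ≤ mdeg R v) ∨ (∃ v, m - 1 ≤ mdeg (multiK j s \ R) v)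

/-- The size Ramsey multipartite number `m_j(S_n, S_m)`. -/
noncomputable def mj (j n m : ℕ) : ℕ := sInf {s | Arrows j s n m}

/-!
View the vertex set as the group `ℤ/j × ℤ/s`, whose parts are the cosets of `0 × ℤ/s`. As `j` is
odd, negation has no fixed point outside that subgroup, so the `(j - 1) s` elements with nonzero
first coordinate split into pairs `±x`, and a Cayley graph on `⌊d/2⌋` such pairs is
`2⌊d/2⌋`-regular and joins only vertices in different parts. For odd `d` add the perfect matching
`(a, b) ↔ (a + 1, b + 1)`, `b` even (a matching because `s` is even): it only uses the
differences `±(1, 1)`, so it is edge-disjoint from any Cayley graph avoiding them.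
-/

open Finset SimpleGraph Function

lemma Finset.exists_invariant_subset_card_eq_two_mul {α : Type*} [DecidableEq α] {f : α → α}
    (hf : Involutive f) {A : Finset α} (hA : ∀ a ∈ A, f a ∈ A) (hfix : ∀ a ∈ A, f a ≠ a) {k : ℕ}
    (hk : 2 * k ≤ #A) : ∃ T ⊆ A, (∀ a ∈ T, f a ∈ T) ∧ #T = 2 * k := by
  induction k with
  | zero => exact ⟨∅, empty_subset A, by simp, rfl⟩
  | succ k ih =>
    obtain ⟨T, hTA, hTf, hT⟩ := ih (by omega)
    obtain ⟨a, haA, haT⟩ : ∃ a ∈ A, a ∉ T := by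
      by_contra! h
      have := card_le_card h
      omega
    have hfaT : f a ∉ T := fun h => haT (hf a ▸ hTf _ h)
    have hafa : a ∉ insert (f a) T := by
      simp only [mem_insert, not_or]
      exact ⟨(hfix a haA).symm, haT⟩
    refine ⟨insert a (insert (f a) T), ?_, ?_, ?_⟩
    · simp only [insert_subset_iff]
      exact ⟨haA, hA a haA, hTA⟩
    · intro b hb
      simp only [mem_insert] at hb ⊢
      rcases hb with rfl | rfl | hb
      · exact Or.inr (Or.inl rfl)
      · exact Or.inl (hf a)
      · exact Or.inr (Or.inr (hTf b hb))
    · rw [card_insert_of_notMem hafa, card_insert_of_notMem hfaT, hT]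
      ring

lemma neg_ne_self_of_odd_natCard {G : Type*} [AddGroup G] (hG : Odd (Nat.card G)) {a : G}
    (ha : a ≠ 0) : -a ≠ a := by
  intro h
  apply ha
  apply hG.coprime_two_right.nsmul_right_bijective.injective
  simp only [two_nsmul, smul_zero]
  rw [← neg_add_cancel a, h]

lemma mdeg_sup_of_disjoint {V : Type*} [Finite V] {G H : SimpleGraph V} (h : Disjoint G H)
    (v : V) : mdeg (G ⊔ H) v = mdeg G v + mdeg H v :=
  Set.ncard_union_eq (disjoint_neighborSet.2 h v) (Set.toFinite _) (Set.toFinite _)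

section AddCayley

variable {G : Type*} [AddGroup G] {S : Set G}

lemma neighborSet_addCayley (hS : ∀ x ∈ S, -x ∈ S) (h0 : (0 : G) ∉ S) (v : G) :
    (addCayley S).neighborSet v = (v + ·) '' S := by
  ext w
  rw [Set.image_add_left, Set.mem_preimage, mem_neighborSet, addCayley_adj]
  constructor
  · rintro ⟨-, h | h⟩
    · exact h
    · simpa using hS _ h
  · intro h
    exact ⟨fun hvw => h0 (by simpa [hvw] using h), Or.inl h⟩

lemma mdeg_addCayley [Finite G] (hS : ∀ x ∈ S, -x ∈ S) (h0 : (0 : G) ∉ S) (v : G) :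
    mdeg (addCayley S) v = S.ncard := by
  rw [mdeg, neighborSet_addCayley hS h0, Set.ncard_image_of_injective _ (add_right_injective v)]

end AddCayley

def matchingOf {V : Type*} (σ : V → V) : SimpleGraph V := fromRel fun u v => σ u = v

lemma neighborSet_matchingOf {V : Type*} {σ : V → V} (hσ : Involutive σ) (hfix : ∀ v, σ v ≠ v)
    (v : V) : (matchingOf σ).neighborSet v = {σ v} := by
  ext w
  rw [mem_neighborSet, matchingOf, fromRel_adj, Set.mem_singleton_iff]
  constructor
  · rintro ⟨-, rfl | rfl⟩
    · rfl
    · exact (hσ w).symm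
  · rintro rfl
    exact ⟨(hfix v).symm, Or.inl rfl⟩

lemma mdeg_matchingOf {V : Type*} {σ : V → V} (hσ : Involutive σ) (hfix : ∀ v, σ v ≠ v)
    (v : V) : mdeg (matchingOf σ) v = 1 := by
  rw [mdeg, neighborSet_matchingOf hσ hfix, Set.ncard_singleton]

lemma matchingOf_le {V : Type*} {σ : V → V} {G : SimpleGraph V} (h : ∀ v, G.Adj v (σ v)) :
    matchingOf σ ≤ G := by
  rintro u v ⟨-, rfl | rfl⟩
  · exact h u
  · exact (h v).symm

lemma disjoint_addCayley_matchingOf {G : Type*} [AddGroup G] {S : Set G} {σ : G → G}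
    (hS : ∀ x ∈ S, -x ∈ S) (hσS : ∀ v, -v + σ v ∉ S) : Disjoint (addCayley S) (matchingOf σ) := by
  refine disjoint_neighborSet.1 fun v => Set.disjoint_left.2 ?_
  rintro w hvw ⟨-, rfl | rfl⟩ <;> rw [mem_neighborSet, addCayley_adj] at hvw
  · exact hσS v (hvw.2.elim id fun h => by simpa using hS _ h)
  · exact hσS w (hvw.2.elim (fun h => by simpa using hS _ h) id)

section ParityShift

variable {G : Type*} [AddGroup G] {s : ℕ}

lemma Fin.even_val_add_iff (hs : Even s) (a b : Fin s) :
    Even (a + b).val ↔ (Even a.val ↔ Even b.val) := by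
  rw [Fin.val_add, ← Nat.even_add, Nat.even_iff, Nat.even_iff,
    Nat.mod_mod_of_dvd _ (even_iff_two_dvd.1 hs)]

variable [NeZero s]

def parityShift (c : G) (v : G × Fin s) : G × Fin s :=
  if Even v.2.val then v + (c, 1) else v - (c, 1)

lemma parityShift_involutive (hs : Even s) (c : G) :
    Involutive (parityShift c : G × Fin s → G × Fin s) := by
  have hone : ¬ Even (1 : Fin s).val := by
    obtain ⟨r, hr⟩ := hs
    rw [Fin.val_one', Nat.mod_eq_of_lt (by have := NeZero.ne s; omega)]
    exact Nat.not_even_one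
  intro v
  by_cases hv : Even v.2.val
  · have : ¬ Even (v + (c, 1)).2.val := by
      rw [Prod.snd_add, Fin.even_val_add_iff hs]
      tauto
    have hσv : parityShift c v = v + (c, 1) := if_pos hv
    rw [hσv]
    exact (if_neg this).trans (add_sub_cancel_right _ _)
  · have : Even (v - (c, 1)).2.val := by
      have h := Fin.even_val_add_iff hs (v.2 - 1) 1
      rw [sub_add_cancel] at h
      rw [Prod.snd_sub]
      tauto
    have hσv : parityShift c v = v - (c, 1) := if_neg hv
    rw [hσv]
    exact (if_pos this).trans (sub_add_cancel _ _)

lemma neg_add_parityShift_notMem {c : G} {T : Set (G × Fin s)} (hT : ∀ x ∈ T, -x ∈ T)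
    (hcT : (c, 1) ∉ T) (v : G × Fin s) : -v + parityShift c v ∉ T := by
  unfold parityShift
  split_ifs
  · rwa [neg_add_cancel_left]
  · rw [sub_eq_add_neg, neg_add_cancel_left]
    exact fun h => hcT (by simpa using hT _ h)

lemma parityShift_fst_ne {c : G} (hc : c ≠ 0) (v : G × Fin s) : (parityShift c v).1 ≠ v.1 := by
  unfold parityShift
  split_ifs
  · simpa using hc
  · simpa using hc

end ParityShift

lemma exists_symmetric_subset_fst_ne_zero {G H : Type*} [AddGroup G] [AddGroup H] [Fintype G]
    [Fintype H] [DecidableEq G] [DecidableEq H] (hG : Odd (Fintype.card G)) (e : G × H) {k : ℕ}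
    (hk : 2 * k + 2 ≤ (Fintype.card G - 1) * Fintype.card H) :
    ∃ T : Finset (G × H), (∀ x ∈ T, -x ∈ T) ∧ (∀ x ∈ T, x.1 ≠ 0) ∧ e ∉ T ∧ #T = 2 * k := by
  set A : Finset (G × H) := (univ.erase 0 ×ˢ univ) \ {e, -e}
  have hA : ∀ x, x ∈ A ↔ x.1 ≠ 0 ∧ x ≠ e ∧ x ≠ -e := by
    intro x
    simp [A]
  have hAcard : 2 * k ≤ #A := by
    have : #(univ.erase (0 : G) ×ˢ (univ : Finset H)) - 2 ≤ #A :=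
      (Nat.sub_le_sub_left card_le_two _).trans (le_card_sdiff _ _)
    rw [card_product, card_erase_of_mem (mem_univ _), card_univ, card_univ] at this
    omega
  obtain ⟨T, hTA, hTneg, hT⟩ := exists_invariant_subset_card_eq_two_mul neg_involutive
    (A := A) (fun x hx => by
      rw [hA] at hx ⊢
      exact ⟨by simpa using hx.1, fun h => hx.2.2 (by rw [← h, neg_neg]),
        fun h => hx.2.1 (neg_injective h)⟩)
    (fun x hx => by
      rw [hA] at hx
      exact fun h => neg_ne_self_of_odd_natCard (by rwa [Nat.card_eq_fintype_card]) hx.1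
        (congrArg Prod.fst h))
    hAcard
  exact ⟨T, hTneg, fun x hx => ((hA x).1 (hTA hx)).1, fun he => ((hA e).1 (hTA he)).2.1 rfl, hT⟩

lemma addCayley_le_multiK {j s : ℕ} [NeZero j] {T : Set (Fin j × Fin s)} (hT : ∀ x ∈ T, x.1 ≠ 0) :
    addCayley T ≤ multiK j s := by
  rw [addCayley_le_iff]
  intro g hg a _
  simpa [multiK] using hT g hg

theorem stmt8 (j s d : ℕ) (hj : 3 ≤ j) (hjo : Odd j)
    (hs : 2 ≤ s) (hse : Even s) (hdle : d ≤ (j - 1) * s - 1) :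
    ∃ H : SimpleGraph (Fin j × Fin s), H ≤ multiK j s ∧ ∀ v, mdeg H v = d := by
  have : NeZero j := ⟨by omega⟩
  have : NeZero s := ⟨by omega⟩
  have hone : (1 : Fin j) ≠ 0 := by rw [Ne, Fin.one_eq_zero_iff]; omega
  have hk : 2 * (d / 2) + 2 ≤ (j - 1) * s := by
    obtain ⟨m, hm⟩ := (hjo.tsub_odd odd_one).mul_right s
    have hpos : 0 < (j - 1) * s := Nat.mul_pos (by omega) (by omega)
    generalize (j - 1) * s = M at hm hdle hpos ⊢
    omega
  obtain ⟨T, hTneg, hT0, heT, hT⟩ := exists_symmetric_subset_fst_ne_zero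
    (by rwa [Fintype.card_fin]) ((1, 1) : Fin j × Fin s) (k := d / 2) (by simpa using hk)
  have h0T : (0 : Fin j × Fin s) ∉ (T : Set _) := fun h => hT0 0 h rfl
  rcases Nat.even_or_odd d with hd | hd
  · refine ⟨addCayley T, addCayley_le_multiK hT0, fun v => ?_⟩
    rw [mdeg_addCayley hTneg h0T, Set.ncard_coe_finset, hT]
    exact Nat.two_mul_div_two_of_even hd
  · let σ : Fin j × Fin s → Fin j × Fin s := parityShift 1
    have hσ : Involutive σ := parityShift_involutive hse 1
    have hfix : ∀ v, σ v ≠ v := fun v h => parityShift_fst_ne hone v (congrArg Prod.fst h)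
    refine ⟨addCayley T ⊔ matchingOf σ, sup_le (addCayley_le_multiK hT0)
      (matchingOf_le fun v => (parityShift_fst_ne hone v).symm), fun v => ?_⟩
    rw [mdeg_sup_of_disjoint (disjoint_addCayley_matchingOf hTneg
        (neg_add_parityShift_notMem hTneg heT)),
      mdeg_addCayley hTneg h0T, mdeg_matchingOf hσ hfix, Set.ncard_coe_finset, hT]
    exact Nat.two_mul_div_two_add_one_of_odd hd
end

section
/- Let j, n, m ≥ 3 and suppose (n+m-4) ≡ 0 mod (j-1), with s = (n+m-4)/(j-1), and suppose j is even, or s is even, or n is even. If K_{j×s} admits an (n-2)-regular spanning subgraph, then there is a red/blue coloring of the edges of K_{j×s} (red = the regular subgraph, blue = the rest) containing no red S_n and no blue S_m; hence K_{j×s} ↛ (S_n, S_m) and so m_j(S_n, S_m) ≥ s + 1 = ⌈(n+m-3)/(j-1)⌉. -/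
lemma mdeg_multiK (j s : ℕ) (v : Fin j × Fin s) : mdeg (multiK j s) v = (j - 1) * s := by
  have hnbr : (multiK j s).neighborSet v = ({v.1}ᶜ : Set (Fin j)) ×ˢ Set.univ := by
    ext u; simp [multiK, ne_comm]
  rw [mdeg, hnbr, Set.ncard_prod, Set.ncard_compl, Set.ncard_singleton, Set.ncard_univ]
  simp

lemma mdeg_sdiff {V : Type*} [Finite V] {G R : SimpleGraph V} (h : R ≤ G) (v : V) :
    mdeg (G \ R) v = mdeg G v - mdeg R v := by
  rw [mdeg, mdeg, mdeg, SimpleGraph.neighborSet_sdiff,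
    Set.ncard_sdiff (SimpleGraph.neighborSet_mono h v)]

lemma mdeg_le_of_embedding {V W : Type*} [Finite W] {G : SimpleGraph V} {G' : SimpleGraph W}
    (f : G ↪g G') (v : V) : mdeg G v ≤ mdeg G' (f v) := by
  rw [mdeg, mdeg, ← Set.ncard_image_of_injective _ f.injective]
  exact Set.ncard_le_ncard (by rintro _ ⟨u, hu, rfl⟩; exact f.map_adj_iff.mpr hu)

lemma arrows_mono {j n m t s : ℕ} (hts : t ≤ s) (hA : Arrows j t n m) : Arrows j s n m := by
  intro R hR
  let f : Fin j × Fin t ↪ Fin j × Fin s := (Function.Embedding.refl _).prodMap (Fin.castLEEmb hts)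
  rcases hA (R.comap f) (fun u w huw => hR huw) with ⟨v, hv⟩ | ⟨v, hv⟩
  · exact .inl ⟨f v, hv.trans (mdeg_le_of_embedding (SimpleGraph.Embedding.comap f R) v)⟩
  · exact .inr ⟨f v,
      hv.trans (mdeg_le_of_embedding (SimpleGraph.Embedding.comap f (multiK j s \ R)) v)⟩

lemma arrows_of_le_mul {j s n m : ℕ} (hj : 0 < j) (hs : 0 < s) (h : n + m - 3 ≤ (j - 1) * s) :
    Arrows j s n m := by
  intro R hR
  let v : Fin j × Fin s := (⟨0, hj⟩, ⟨0, hs⟩)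
  by_cases hred : n - 1 ≤ mdeg R v
  · exact .inl ⟨v, hred⟩
  · refine .inr ⟨v, ?_⟩
    rw [mdeg_sdiff hR, mdeg_multiK]
    omega

lemma not_arrows_of_mdeg_le {j s n m : ℕ} (hn : 2 ≤ n) (hm : 2 ≤ m)
    {R : SimpleGraph (Fin j × Fin s)} (hR : R ≤ multiK j s) (hred : ∀ v, mdeg R v ≤ n - 2)
    (hblue : ∀ v, mdeg (multiK j s \ R) v ≤ m - 2) : ¬ Arrows j s n m := by
  intro hA
  rcases hA R hR with ⟨v, hv⟩ | ⟨v, hv⟩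
  · have := hred v; omega
  · have := hblue v; omega

lemma lt_mj_of_not_arrows {j s n m t : ℕ} (hA : Arrows j t n m) (hs : ¬ Arrows j s n m) :
    s < mj j n m :=
  le_csInf ⟨t, hA⟩ fun _ ht => not_lt.mp fun hlt => hs (arrows_mono (Nat.le_of_lt_succ hlt) ht)

theorem stmt9_general (j n m s : ℕ) (hj : 3 ≤ j) (hn : 3 ≤ n) (hm : 3 ≤ m)
    (hdvd : (j - 1) ∣ (n + m - 4)) (hs : s = (n + m - 4) / (j - 1))
    (H : SimpleGraph (Fin j × Fin s)) (hH : H ≤ multiK j s)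
    (hreg : ∀ v, mdeg H v = n - 2) :
    (∃ R : SimpleGraph (Fin j × Fin s), R ≤ multiK j s ∧
        (∀ v, mdeg R v ≤ n - 2) ∧ (∀ v, mdeg (multiK j s \ R) v ≤ m - 2)) ∧
      ¬ Arrows j s n m ∧
      s + 1 ≤ mj j n m ∧ s + 1 = (n + m - 3) ⌈/⌉ (j - 1) := by
  have htot : (j - 1) * s = n + m - 4 := hs ▸ Nat.mul_div_cancel' hdvd
  have hblue : ∀ v, mdeg (multiK j s \ H) v = m - 2 := fun v => by
    rw [mdeg_sdiff hH, mdeg_multiK, hreg, htot]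
    omega
  have hnA : ¬ Arrows j s n m :=
    not_arrows_of_mdeg_le (by omega) (by omega) hH (hreg · |>.le) (hblue · |>.le)
  have hA : Arrows j (s + 1) n m :=
    arrows_of_le_mul (by omega) s.succ_pos (by rw [mul_add, htot]; omega)
  refine ⟨⟨H, hH, (hreg · |>.le), (hblue · |>.le)⟩, hnA, lt_mj_of_not_arrows hA hnA, ?_⟩
  rw [Nat.ceilDiv_eq_add_pred_div, show n + m - 3 + (j - 1) - 1 = n + m - 4 + (j - 1) by omega,
    Nat.add_div_right _ (by omega), hs]

theorem stmt9 (j n m s : ℕ) (hj : 3 ≤ j) (hn : 3 ≤ n) (hm : 3 ≤ m)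
    (hdvd : (j - 1) ∣ (n + m - 4)) (hs : s = (n + m - 4) / (j - 1))
    (hpar : Even j ∨ Even s ∨ Even n)
    (H : SimpleGraph (Fin j × Fin s)) (hH : H ≤ multiK j s)
    (hreg : ∀ v, mdeg H v = n - 2) :
    (∃ R : SimpleGraph (Fin j × Fin s), R ≤ multiK j s ∧
        (∀ v, mdeg R v ≤ n - 2) ∧ (∀ v, mdeg (multiK j s \ R) v ≤ m - 2)) ∧
      ¬ Arrows j s n m ∧
      s + 1 ≤ mj j n m ∧ s + 1 = (n + m - 3) ⌈/⌉ (j - 1) :=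
  stmt9_general j n m s hj hn hm hdvd hs H hH hreg
end
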